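/- arXiv:2505.19396 — 3 statements merged into one kernel-verified Lean document; each statement's English description precedes it below -/
import Mathlib

section
/- For any logit function g: X → ℝ with f = σ∘g (σ the sigmoid), the smooth calibration error of f is at most the dual smooth calibration error of g: smCE(f,D) ≤ smCE^σ(g,D). -/
open MeasureTheory

noncomputable def sigmoid (t : ℝ) : ℝ := (1 + Real.exp (-t))⁻¹

/-- Smooth calibration error. -/
noncomputable def smCE {X : Type*} [MeasurableSpace X] (D : Measure (X × ℝ)) (f : X → ℝ) : ℝ :=
  sSup {r : ℝ | ∃ h : ℝ → ℝ, LipschitzWith 1 h ∧ (∀ t, |h t| ≤ 1) ∧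
    r = ∫ z, h (f z.1) * (z.2 - f z.1) ∂D}

/-- Dual smooth calibration error of a logit function `g`:
the supremum over (1/4)-Lipschitz functions `h : ℝ → [-1,1]` of `E[h(g X) * (Y - σ(g X))]`. -/
noncomputable def smCEsig {X : Type*} [MeasurableSpace X] (D : Measure (X × ℝ)) (g : X → ℝ) : ℝ :=
  sSup {r : ℝ | ∃ h : ℝ → ℝ, LipschitzWith (1/4) h ∧ (∀ t, |h t| ≤ 1) ∧
    r = ∫ z, h (g z.1) * (z.2 - sigmoid (g z.1)) ∂D}

lemma one_add_exp_pos (t : ℝ) : 0 < 1 + Real.exp (-t) := by positivity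

lemma sigmoid_pos (t : ℝ) : 0 < sigmoid t := by
  unfold sigmoid; positivity

lemma sigmoid_lt_one (t : ℝ) : sigmoid t < 1 := by
  unfold sigmoid
  rw [inv_lt_one_iff₀]
  right
  linarith [Real.exp_pos (-t)]

lemma deriv_sigmoid (t : ℝ) :
    HasDerivAt sigmoid (Real.exp (-t) / (1 + Real.exp (-t)) ^ 2) t := by
  have h1 : HasDerivAt (fun t : ℝ => 1 + Real.exp (-t)) (-Real.exp (-t)) t := by
    have := (Real.hasDerivAt_exp (-t)).comp t (hasDerivAt_neg t)
    simpa using (this.const_add 1)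
  have h2 := h1.inv (ne_of_gt (one_add_exp_pos t))
  convert h2 using 1
  · rfl
  · rfl
  · rfl
  · rw [neg_neg]

lemma sigmoid_lipschitz : LipschitzWith (1/4) sigmoid := by
  have hd : ∀ t : ℝ, HasDerivAt sigmoid (Real.exp (-t) / (1 + Real.exp (-t)) ^ 2) t :=
    deriv_sigmoid
  apply lipschitzWith_of_nnnorm_deriv_le (fun t => (hd t).differentiableAt)
  intro t
  rw [(hd t).deriv]
  rw [← NNReal.coe_le_coe]
  push_cast
  rw [Real.norm_eq_abs, abs_of_nonneg (by positivity)]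
  rw [div_le_iff₀ (by positivity)]
  nlinarith [Real.exp_pos (-t), sq_nonneg (1 - Real.exp (-t))]

theorem smCE_le_dual_smCE {X : Type*} [MeasurableSpace X]
    (D : Measure (X × ℝ)) [IsProbabilityMeasure D]
    (g : X → ℝ) (hY : ∀ᵐ z ∂D, z.2 = 0 ∨ z.2 = 1) :
    smCE D (fun x => sigmoid (g x)) ≤ smCEsig D g := by
  unfold smCE smCEsig
  have hbdd : BddAbove {r : ℝ | ∃ h : ℝ → ℝ, LipschitzWith (1/4) h ∧ (∀ t, |h t| ≤ 1) ∧
      r = ∫ z, h (g z.1) * (z.2 - sigmoid (g z.1)) ∂D} := by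
    refine ⟨1, ?_⟩
    rintro r ⟨h, hlip, hbd, rfl⟩
    have : ‖∫ z, h (g z.1) * (z.2 - sigmoid (g z.1)) ∂D‖ ≤ 1 := by
      have := norm_integral_le_of_norm_le_const (μ := D)
        (f := fun z : X × ℝ => h (g z.1) * (z.2 - sigmoid (g z.1))) (C := 1) ?_
      · simpa using this
      · filter_upwards [hY] with z hz
        rw [Real.norm_eq_abs, abs_mul]
        have h1 : |h (g z.1)| ≤ 1 := hbd _
        have h2 : |z.2 - sigmoid (g z.1)| ≤ 1 := by
          have := sigmoid_pos (g z.1)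
          have := sigmoid_lt_one (g z.1)
          rcases hz with hz | hz <;> rw [hz, abs_le] <;> constructor <;> linarith
        calc |h (g z.1)| * |z.2 - sigmoid (g z.1)| ≤ 1 * 1 :=
              mul_le_mul h1 h2 (abs_nonneg _) (by linarith [abs_nonneg (h (g z.1))])
          _ = 1 := by ring
    calc ∫ z, h (g z.1) * (z.2 - sigmoid (g z.1)) ∂D
        ≤ ‖∫ z, h (g z.1) * (z.2 - sigmoid (g z.1)) ∂D‖ := Real.le_norm_self _
      _ ≤ 1 := this
  apply csSup_le
  · exact ⟨0, 0, LipschitzWith.const' (0:ℝ), fun t => by simp, by simp⟩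
  · rintro r ⟨h, hlip, hbd, rfl⟩
    apply le_csSup hbdd
    refine ⟨h ∘ sigmoid, ?_, fun t => hbd _, rfl⟩
    have := hlip.comp sigmoid_lipschitz
    simpa using this
end

section
/- The empirical smooth calibration error smCE(f, S_n) equals the optimal value of the linear program: maximize (1/n)·Σ_{i=1}^n (y_i - v_i)·ω_i over ω ∈ ℝ^n subject to |ω_i| ≤ 1 for all i and |ω_i - ω_j| ≤ |v_i - v_j| for all i,j, where v_i = f(x_i). In particular, the supremum over Lipschitz functions in the definition of smCE is attained by the maximum of this finite-dimensional problem. -/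
/-- Empirical smooth calibration error over a dataset of `n` points. -/
noncomputable def empSmCE {X : Type*} (n : ℕ) (x : Fin n → X) (y : Fin n → ℝ) (f : X → ℝ) : ℝ :=
  sSup {r : ℝ | ∃ h : ℝ → ℝ, LipschitzWith 1 h ∧ (∀ t, |h t| ≤ 1) ∧
    r = (1 / n) * ∑ i, h (f (x i)) * (y i - f (x i))}

/-- The empirical smooth CE is the *maximum* (attained optimal value) of the linear program
maximizing `(1/n) Σᵢ (yᵢ - vᵢ) ωᵢ` subject to `|ωᵢ| ≤ 1` and `|ωᵢ - ωⱼ| ≤ |vᵢ - vⱼ|`,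
where `vᵢ = f xᵢ`. -/
theorem empSmCE_eq_LP {X : Type*} (n : ℕ) (hn : 0 < n) (x : Fin n → X) (y : Fin n → ℝ)
    (hy : ∀ i, y i = 0 ∨ y i = 1) (f : X → ℝ) (hf : ∀ a, f a ∈ Set.Icc (0 : ℝ) 1) :
    IsGreatest {r : ℝ | ∃ ω : Fin n → ℝ, (∀ i, |ω i| ≤ 1) ∧
        (∀ i j, |ω i - ω j| ≤ |f (x i) - f (x j)|) ∧
        r = (1 / n) * ∑ i, (y i - f (x i)) * ω i}
      (empSmCE n x y f) := by
  classical
  set v : Fin n → ℝ := fun i => f (x i) with hv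
  set B : Set ℝ := {r : ℝ | ∃ ω : Fin n → ℝ, (∀ i, |ω i| ≤ 1) ∧
        (∀ i j, |ω i - ω j| ≤ |v i - v j|) ∧
        r = (1 / n) * ∑ i, (y i - v i) * ω i} with hB
  set A : Set ℝ := {r : ℝ | ∃ h : ℝ → ℝ, LipschitzWith 1 h ∧ (∀ t, |h t| ≤ 1) ∧
    r = (1 / n) * ∑ i, h (v i) * (y i - v i)} with hA
  -- A = B
  have hAB : A = B := by
    ext r
    constructor
    · rintro ⟨h, hlip, hbd, rfl⟩
      refine ⟨fun i => h (v i), fun i => hbd _, fun i j => ?_, ?_⟩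
      · have := hlip.dist_le_mul (v i) (v j)
        simpa [Real.dist_eq] using this
      · congr 1
        exact Finset.sum_congr rfl fun i _ => mul_comm _ _
    · rintro ⟨ω, hbd, hlipc, rfl⟩
      -- build g0 on the range of v
      set g0 : ℝ → ℝ := fun t => if h : ∃ i, v i = t then ω h.choose else 0 with hg0
      have hg0v : ∀ i, g0 (v i) = ω i := by
        intro i
        have hex : ∃ j, v j = v i := ⟨i, rfl⟩
        have hch : v hex.choose = v i := hex.choose_spec
        have : |ω hex.choose - ω i| ≤ |v hex.choose - v i| := hlipc _ _
        rw [hch, sub_self, abs_zero] at this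
        have : ω hex.choose = ω i := by
          have := abs_nonpos_iff.mp (le_antisymm this (abs_nonneg _)).le
          linarith [sub_eq_zero.mp this]
        simp only [hg0, dif_pos hex, this]
      have hlip0 : LipschitzOnWith 1 g0 (Set.range v) := by
        rw [lipschitzOnWith_iff_dist_le_mul]
        rintro _ ⟨i, rfl⟩ _ ⟨j, rfl⟩
        rw [hg0v i, hg0v j]
        simpa [Real.dist_eq] using hlipc i j
      obtain ⟨g, glip, hgeq⟩ := hlip0.extend_real
      set h : ℝ → ℝ := fun t => max (min (g t) 1) (-1) with hh
      have hhlip : LipschitzWith 1 h := (glip.min_const 1).max_const (-1)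
      have hhbd : ∀ t, |h t| ≤ 1 := by
        intro t
        rw [abs_le]
        constructor
        · exact le_max_right _ _
        · exact max_le (min_le_right _ _) (by norm_num)
      have hhv : ∀ i, h (v i) = ω i := by
        intro i
        have : g (v i) = ω i := by
          rw [← hgeq ⟨i, rfl⟩, hg0v i]
        rw [hh]
        simp only [this]
        rcases abs_le.mp (hbd i) with ⟨h1, h2⟩
        rw [min_eq_left h2, max_eq_left h1]
      refine ⟨h, hhlip, hhbd, ?_⟩
      congr 1
      exact Finset.sum_congr rfl fun i _ => by rw [hhv i, mul_comm]
  -- B is compact, hence attains its sup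
  have hKcompact : IsCompact {ω : Fin n → ℝ | (∀ i, |ω i| ≤ 1) ∧
      (∀ i j, |ω i - ω j| ≤ |v i - v j|)} := by
    have hsub : {ω : Fin n → ℝ | (∀ i, |ω i| ≤ 1) ∧
        (∀ i j, |ω i - ω j| ≤ |v i - v j|)} ⊆ Set.pi Set.univ (fun _ => Set.Icc (-1 : ℝ) 1) := by
      rintro ω ⟨h1, _⟩ i _
      exact abs_le.mp (h1 i)
    have hc : IsCompact (Set.pi Set.univ (fun _ : Fin n => Set.Icc (-1 : ℝ) 1)) :=
      isCompact_univ_pi fun _ => isCompact_Icc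
    refine hc.of_isClosed_subset ?_ hsub
    have h1 : IsClosed {ω : Fin n → ℝ | ∀ i, |ω i| ≤ 1} := by
      have : {ω : Fin n → ℝ | ∀ i, |ω i| ≤ 1} = ⋂ i, {ω | |ω i| ≤ 1} := by
        ext; simp
      rw [this]
      exact isClosed_iInter fun i =>
        isClosed_le (by continuity) continuous_const
    have h2 : IsClosed {ω : Fin n → ℝ | ∀ i j, |ω i - ω j| ≤ |v i - v j|} := by
      have : {ω : Fin n → ℝ | ∀ i j, |ω i - ω j| ≤ |v i - v j|} =
          ⋂ i, ⋂ j, {ω | |ω i - ω j| ≤ |v i - v j|} := by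
        ext; simp
      rw [this]
      exact isClosed_iInter fun i => isClosed_iInter fun j =>
        isClosed_le (by continuity) continuous_const
    have : {ω : Fin n → ℝ | (∀ i, |ω i| ≤ 1) ∧ (∀ i j, |ω i - ω j| ≤ |v i - v j|)} =
        {ω : Fin n → ℝ | ∀ i, |ω i| ≤ 1} ∩ {ω : Fin n → ℝ | ∀ i j, |ω i - ω j| ≤ |v i - v j|} := rfl
    rw [this]
    exact h1.inter h2
  have hBimg : B = (fun ω : Fin n → ℝ => (1 / n : ℝ) * ∑ i, (y i - v i) * ω i) ''
      {ω : Fin n → ℝ | (∀ i, |ω i| ≤ 1) ∧ (∀ i j, |ω i - ω j| ≤ |v i - v j|)} := by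
    ext r

    constructor
    · rintro ⟨ω, h1, h2, rfl⟩; exact ⟨ω, ⟨h1, h2⟩, rfl⟩
    · rintro ⟨ω, ⟨h1, h2⟩, rfl⟩; exact ⟨ω, h1, h2, rfl⟩
  have hcont : Continuous (fun ω : Fin n → ℝ => (1 / n : ℝ) * ∑ i, (y i - v i) * ω i) :=
    continuous_const.mul (continuous_finset_sum _ fun i _ =>
      continuous_const.mul (continuous_apply i))
  have hBcompact : IsCompact B := by
    rw [hBimg]; exact hKcompact.image hcont
  have hBne : B.Nonempty := ⟨(1 / n : ℝ) * ∑ i, (y i - v i) * (0 : ℝ),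
    ⟨fun _ => 0, fun i => by simp, fun i j => by simp [abs_nonneg], by simp⟩⟩
  have hsup : empSmCE n x y f = sSup B := by
    rw [empSmCE, ← hA, hAB]
  rw [hsup]
  exact ⟨hBcompact.sSup_mem hBne, (hBcompact.isLUB_sSup hBne).1⟩
end

section
/- Margin bound in RKHS implies gradient control: if there exists φ in an RKHS H with ‖φ‖_H ≤ 1 such that (2Y_i - 1)·φ(X_i) ≥ γ for all training points, then the L¹ norm of the functional gradient of the cross-entropy loss satisfies (1/n)Σ_i |σ(g(X_i)) - Y_i| ≤ (1/γ)·‖T_k ∇_g L_n(g)‖_H, where T_k ∇_g L_n(g) = (1/n)Σ_i k(X_i, ·)·(σ(g(X_i)) - Y_i). -/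
/-- Margin bound in an RKHS (represented by its feature map `Φ : X → H`, so that the
evaluation of `φ ∈ H` at `x` is `⟪Φ x, φ⟫`) implies control of the `L¹` norm of the
functional gradient of the cross-entropy loss by the RKHS norm of the kernel-smoothed
gradient `T_k ∇ = (1/n) Σᵢ (σ(g Xᵢ) - Yᵢ) • Φ(Xᵢ)`. -/
theorem rkhs_margin_grad_control {X H : Type*}
    [NormedAddCommGroup H] [InnerProductSpace ℝ H]
    (n : ℕ) (hn : 0 < n) (x : Fin n → X) (y : Fin n → ℝ) (hy : ∀ i, y i = 0 ∨ y i = 1)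
    (g : X → ℝ) (Φ : X → H) (γ : ℝ) (hγ : 0 < γ)
    (φ : H) (hφ : ‖φ‖ ≤ 1)
    (hmargin : ∀ i, γ ≤ (2 * y i - 1) * (inner ℝ (Φ (x i)) φ : ℝ)) :
    (1 / n) * ∑ i, |sigmoid (g (x i)) - y i| ≤
      (1 / γ) * ‖(1 / n : ℝ) • ∑ i, (sigmoid (g (x i)) - y i) • Φ (x i)‖ := by
  set s : Fin n → ℝ := fun i => sigmoid (g (x i)) with hsdef
  have hsig : ∀ t : ℝ, 0 < sigmoid t ∧ sigmoid t < 1 := by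
    intro t
    have h1 : 0 < Real.exp (-t) := Real.exp_pos _
    constructor
    · unfold sigmoid; positivity
    · unfold sigmoid
      rw [inv_lt_one_iff₀]
      right; linarith
  have key : ∀ i, γ * |s i - y i| ≤ (y i - s i) * (inner ℝ (Φ (x i)) φ : ℝ) := by
    intro i
    obtain ⟨h0, h1⟩ := hsig (g (x i))
    rcases hy i with h | h
    · have habs : |s i - y i| = s i := by rw [h]; simp [abs_of_pos h0]; exact h0.le
      have hm : γ ≤ -(inner ℝ (Φ (x i)) φ : ℝ) := by
        have := hmargin i; rw [h] at this; linarith [this]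
      rw [habs, h]
      have : γ * s i ≤ -(inner ℝ (Φ (x i)) φ : ℝ) * s i :=
        mul_le_mul_of_nonneg_right hm h0.le
      nlinarith
    · have habs : |s i - y i| = 1 - s i := by
        rw [h, abs_of_nonpos (by linarith)]; ring
      have hm : γ ≤ (inner ℝ (Φ (x i)) φ : ℝ) := by
        have := hmargin i; rw [h] at this; linarith [this]
      rw [habs, h]
      nlinarith
  have hsum : γ * ∑ i, |s i - y i| ≤ ∑ i, (y i - s i) * (inner ℝ (Φ (x i)) φ : ℝ) := by
    rw [Finset.mul_sum]
    exact Finset.sum_le_sum fun i _ => key i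
  have hinner : ∑ i, (y i - s i) * (inner ℝ (Φ (x i)) φ : ℝ)
      = (inner ℝ (∑ i, (y i - s i) • Φ (x i)) φ : ℝ) := by
    rw [sum_inner]
    simp [real_inner_smul_left]
  have hnorm : (inner ℝ (∑ i, (y i - s i) • Φ (x i)) φ : ℝ)
      ≤ ‖∑ i, (s i - y i) • Φ (x i)‖ := by
    have h1 := real_inner_le_norm (∑ i, (y i - s i) • Φ (x i)) φ
    have h2 : ‖∑ i, (y i - s i) • Φ (x i)‖ = ‖∑ i, (s i - y i) • Φ (x i)‖ := by
      rw [← norm_neg, ← Finset.sum_neg_distrib]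
      congr 1
      apply Finset.sum_congr rfl
      intro i _
      rw [← neg_smul]; ring_nf
    have hnn : (0:ℝ) ≤ ‖∑ i, (y i - s i) • Φ (x i)‖ := norm_nonneg _
    calc (inner ℝ (∑ i, (y i - s i) • Φ (x i)) φ : ℝ)
        ≤ ‖∑ i, (y i - s i) • Φ (x i)‖ * ‖φ‖ := h1
      _ ≤ ‖∑ i, (y i - s i) • Φ (x i)‖ * 1 := by
          exact mul_le_mul_of_nonneg_left hφ hnn
      _ = ‖∑ i, (s i - y i) • Φ (x i)‖ := by rw [mul_one, h2]
  have hmain : γ * ∑ i, |s i - y i| ≤ ‖∑ i, (s i - y i) • Φ (x i)‖ := by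
    calc γ * ∑ i, |s i - y i| ≤ _ := hsum
      _ = _ := hinner
      _ ≤ _ := hnorm
  have hn' : (0:ℝ) < n := by exact_mod_cast hn
  have hnormsmul : ‖(1 / n : ℝ) • ∑ i, (s i - y i) • Φ (x i)‖
      = (1 / n) * ‖∑ i, (s i - y i) • Φ (x i)‖ := by
    rw [norm_smul, Real.norm_eq_abs, abs_of_pos (by positivity)]
  rw [hnormsmul]
  rw [div_mul_eq_mul_div, div_mul_eq_mul_div, one_mul, one_mul,
    div_le_div_iff₀ hn' hγ]
  have heq : 1 / (n:ℝ) * ‖∑ i, (s i - y i) • Φ (x i)‖ * n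
      = ‖∑ i, (s i - y i) • Φ (x i)‖ := by field_simp
  rw [heq]
  show (∑ i, |s i - y i|) * γ ≤ _
  linarith [hmain]
end
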